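/- For every W ∈ ℝ^{k×d}, the proxy function and the cross-entropy loss satisfy G(W) ≤ L(W) and G(W) ≥ L(W) · (1 − n·L(W)/2). -/

import Mathlib

open Finset Filter

/-- Softmax map on `ℝ^k`. -/
noncomputable def softmax {k : ℕ} (z : Fin k → ℝ) (c : Fin k) : ℝ :=
  Real.exp (z c) / ∑ j, Real.exp (z j)

/-- Logits `W x` of a linear classifier `W : ℝ^{k×d}` on input `x : ℝ^d`. -/
noncomputable def logits {k d : ℕ} (W : Fin k → Fin d → ℝ) (x : Fin d → ℝ) : Fin k → ℝ :=
  fun c => ∑ j, W c j * x j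

/-- Cross-entropy loss `L(W) = -(1/n) ∑ᵢ log S_{yᵢ}(W xᵢ)`. -/
noncomputable def lossCE {n k d : ℕ} (x : Fin n → Fin d → ℝ) (y : Fin n → Fin k)
    (W : Fin k → Fin d → ℝ) : ℝ :=
  -((1 : ℝ) / n) * ∑ i, Real.log (softmax (logits W (x i)) (y i))

/-- Proxy function `G(W) = (1/n) ∑ᵢ (1 - S_{yᵢ}(W xᵢ))`. -/
noncomputable def proxyG {n k d : ℕ} (x : Fin n → Fin d → ℝ) (y : Fin n → Fin k)
    (W : Fin k → Fin d → ℝ) : ℝ :=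
  ((1 : ℝ) / n) * ∑ i, (1 - softmax (logits W (x i)) (y i))

/-- Per-sample gradient matrix `gᵢ(W) = (S(W xᵢ) - e_{yᵢ}) xᵢᵀ`. -/
noncomputable def sampleGrad {k d : ℕ} (x : Fin d → ℝ) (y : Fin k)
    (W : Fin k → Fin d → ℝ) : Fin k → Fin d → ℝ :=
  fun c j => (softmax (logits W x) c - (if c = y then 1 else 0)) * x j

/-- Full gradient matrix `D(W) = (1/n) ∑ᵢ gᵢ(W)`. -/
noncomputable def gradCE {n k d : ℕ} (x : Fin n → Fin d → ℝ) (y : Fin n → Fin k)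
    (W : Fin k → Fin d → ℝ) : Fin k → Fin d → ℝ :=
  fun c j => ((1 : ℝ) / n) * ∑ i, sampleGrad (x i) (y i) W c j

/-- Entry-wise 1-norm of a matrix. -/
noncomputable def norm1M {k d : ℕ} (A : Fin k → Fin d → ℝ) : ℝ :=
  ∑ c, ∑ j, |A c j|

/-- 1-norm of a vector. -/
noncomputable def norm1V {d : ℕ} (v : Fin d → ℝ) : ℝ := ∑ j, |v j|

/-- `min_{c ≠ y} (e_y - e_c)ᵀ A x`. -/
noncomputable def marginMin {k d : ℕ} (hk : 2 ≤ k) (A : Fin k → Fin d → ℝ)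
    (x : Fin d → ℝ) (y : Fin k) : ℝ :=
  (Finset.univ.erase y).inf'
    (by
      obtain ⟨cne, hcne⟩ := Fintype.exists_ne_of_one_lt_card
        (by simpa using (by omega : 1 < k)) y
      exact ⟨cne, Finset.mem_erase.mpr ⟨hcne, Finset.mem_univ _⟩⟩)
    (fun c => logits A x y - logits A x c)

/-- `min_{i ∈ [n], c ≠ yᵢ} (e_{yᵢ} - e_c)ᵀ W xᵢ`. -/
noncomputable def dataMargin {n k d : ℕ} (hn : 1 ≤ n) (hk : 2 ≤ k)
    (x : Fin n → Fin d → ℝ) (y : Fin n → Fin k) (W : Fin k → Fin d → ℝ) : ℝ :=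
  Finset.univ.inf' ⟨⟨0, by omega⟩, Finset.mem_univ _⟩
    (fun i => marginMin hk W (x i) (y i))

/-- Max margin `γ` over the max-norm unit ball. -/
noncomputable def gammaMax {n k d : ℕ} (hn : 1 ≤ n) (hk : 2 ≤ k)
    (x : Fin n → Fin d → ℝ) (y : Fin n → Fin k) : ℝ :=
  sSup { g : ℝ | ∃ W' : Fin k → Fin d → ℝ, ‖W'‖ ≤ 1 ∧ g = dataMargin hn hk x y W' }

/-- Mini-batch gradient `(1/b) ∑_{i ∈ B} gᵢ(W)`. -/
noncomputable def batchGrad {n k d : ℕ} (x : Fin n → Fin d → ℝ) (y : Fin n → Fin k)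
    (B : Finset (Fin n)) (b : ℕ) (W : Fin k → Fin d → ℝ) : Fin k → Fin d → ℝ :=
  fun c j => ((1 : ℝ) / b) * ∑ i ∈ B, sampleGrad (x i) (y i) W c j

/-- Frobenius norm of a matrix. -/
noncomputable def frobNorm {k d : ℕ} (A : Fin k → Fin d → ℝ) : ℝ :=
  Real.sqrt (∑ c, ∑ j, (A c j) ^ 2)

/-! The per-sample losses `ℓᵢ = -log S_{yᵢ}(W xᵢ)` are nonnegative and `G` averages
`1 - exp (-ℓᵢ)`. Pointwise, `ℓ - ℓ²/2 ≤ 1 - exp (-ℓ) ≤ ℓ` for `ℓ ≥ 0`; averaging gives `G ≤ L`,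
and for the lower bound `∑ ℓᵢ² ≤ (∑ ℓᵢ)² = (n L)²` turns `G ≥ L - (1/n) ∑ ℓᵢ² / 2` into
`G ≥ L - n L² / 2`. -/

namespace Real

theorem one_sub_exp_neg_le (u : ℝ) : 1 - exp (-u) ≤ u := by
  linarith [add_one_le_exp (-u)]

theorem sub_sq_div_two_le_one_sub_exp_neg {u : ℝ} (hu : 0 ≤ u) :
    u - u ^ 2 / 2 ≤ 1 - exp (-u) := by
  have hq : 0 < 1 + u + u ^ 2 / 2 := by positivity
  suffices exp (-u) ≤ 1 - u + u ^ 2 / 2 by linarith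
  calc exp (-u) = (exp u)⁻¹ := exp_neg u
    _ ≤ (1 + u + u ^ 2 / 2)⁻¹ := inv_anti₀ hq (quadratic_le_exp_of_nonneg hu)
    -- `(1 - u + u²/2)(1 + u + u²/2) = 1 + u⁴/4`
    _ ≤ 1 - u + u ^ 2 / 2 := by
      rw [inv_le_iff_one_le_mul₀ hq]
      nlinarith [pow_nonneg hu 4]

end Real

theorem Finset.sum_sub_sq_div_two_le_sum_one_sub_exp_neg {ι : Type*} (s : Finset ι)
    {ℓ : ι → ℝ} (hℓ : ∀ i ∈ s, 0 ≤ ℓ i) :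
    (∑ i ∈ s, ℓ i) - (∑ i ∈ s, ℓ i) ^ 2 / 2 ≤ ∑ i ∈ s, (1 - Real.exp (-ℓ i)) :=
  calc (∑ i ∈ s, ℓ i) - (∑ i ∈ s, ℓ i) ^ 2 / 2
      ≤ (∑ i ∈ s, ℓ i) - (∑ i ∈ s, ℓ i ^ 2) / 2 := by
        gcongr; exact sum_sq_le_sq_sum_of_nonneg hℓ
    _ = ∑ i ∈ s, (ℓ i - ℓ i ^ 2 / 2) := by rw [sum_sub_distrib, sum_div]
    _ ≤ ∑ i ∈ s, (1 - Real.exp (-ℓ i)) :=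
        sum_le_sum fun i hi => Real.sub_sq_div_two_le_one_sub_exp_neg (hℓ i hi)

theorem softmax_pos {k : ℕ} (z : Fin k → ℝ) (c : Fin k) : 0 < softmax z c :=
  div_pos (Real.exp_pos _) (sum_pos (fun _ _ => Real.exp_pos _) ⟨c, mem_univ c⟩)

theorem softmax_le_one {k : ℕ} (z : Fin k → ℝ) (c : Fin k) : softmax z c ≤ 1 :=
  div_le_one_of_le₀ (single_le_sum (fun _ _ => (Real.exp_pos _).le) (mem_univ c))
    (sum_nonneg fun _ _ => (Real.exp_pos _).le)

noncomputable def sampleLoss {k d : ℕ} (x : Fin d → ℝ) (y : Fin k)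
    (W : Fin k → Fin d → ℝ) : ℝ :=
  -Real.log (softmax (logits W x) y)

theorem sampleLoss_nonneg {k d : ℕ} (x : Fin d → ℝ) (y : Fin k) (W : Fin k → Fin d → ℝ) :
    0 ≤ sampleLoss x y W :=
  neg_nonneg.mpr (Real.log_nonpos (softmax_pos _ _).le (softmax_le_one _ _))

theorem exp_neg_sampleLoss {k d : ℕ} (x : Fin d → ℝ) (y : Fin k) (W : Fin k → Fin d → ℝ) :
    Real.exp (-sampleLoss x y W) = softmax (logits W x) y := by
  rw [sampleLoss, neg_neg, Real.exp_log (softmax_pos _ _)]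

theorem lossCE_eq_mean_sampleLoss {n k d : ℕ} (x : Fin n → Fin d → ℝ) (y : Fin n → Fin k)
    (W : Fin k → Fin d → ℝ) : lossCE x y W = 1 / n * ∑ i, sampleLoss (x i) (y i) W := by
  simp only [lossCE, sampleLoss, sum_neg_distrib]
  ring

theorem proxyG_eq_mean_one_sub_exp_neg_sampleLoss {n k d : ℕ} (x : Fin n → Fin d → ℝ)
    (y : Fin n → Fin k) (W : Fin k → Fin d → ℝ) :
    proxyG x y W = 1 / n * ∑ i, (1 - Real.exp (-sampleLoss (x i) (y i) W)) := by
  simp only [proxyG, exp_neg_sampleLoss]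

theorem proxy_loss_comparison_general (n k d : ℕ)
    (x : Fin n → Fin d → ℝ) (y : Fin n → Fin k) (W : Fin k → Fin d → ℝ) :
    proxyG x y W ≤ lossCE x y W
    ∧ proxyG x y W ≥ lossCE x y W * (1 - (n : ℝ) * lossCE x y W / 2) := by
  rw [proxyG_eq_mean_one_sub_exp_neg_sampleLoss, lossCE_eq_mean_sampleLoss]
  have hℓ : ∀ i ∈ univ, 0 ≤ sampleLoss (x i) (y i) W := fun i _ => sampleLoss_nonneg _ _ _
  set T := ∑ i, sampleLoss (x i) (y i) W
  constructor
  · gcongr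
    exact sum_le_sum fun i _ => Real.one_sub_exp_neg_le _
  · have hmean : 1 / n * T * (1 - n * (1 / n * T) / 2) = 1 / n * (T - T ^ 2 / 2) := by
      rcases eq_or_ne (n : ℝ) 0 with hn | hn
      · simp [hn]
      · field_simp
    rw [ge_iff_le, hmean]
    gcongr
    exact univ.sum_sub_sq_div_two_le_sum_one_sub_exp_neg hℓ

/-- proxy-loss comparison `G(W) ≤ L(W)` and `G(W) ≥ L(W)(1 − n L(W)/2)`. -/
theorem proxy_loss_comparison (n k d : ℕ) (hn : 1 ≤ n) (hk : 2 ≤ k) (hd : 1 ≤ d)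
    (x : Fin n → Fin d → ℝ) (y : Fin n → Fin k) (W : Fin k → Fin d → ℝ) :
    proxyG x y W ≤ lossCE x y W
    ∧ proxyG x y W ≥ lossCE x y W * (1 - (n : ℝ) * lossCE x y W / 2) :=
  proxy_loss_comparison_general n k d x y W
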